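/- Let m ≥ 1 and η > 0, and define G : ℝ^m → ℝ by G(U) = η|U|²(|U|² − 2 cos|U|). Then G satisfies condition (G'₆) with μ₀ = 3 and κ₀ = 3η: for all U ∈ ℝ^m, (∇G(U),U) ≥ 3 G(U) − 3η|U|². -/

import Mathlib

/-! Writing `G U = φ ‖U‖` with `φ r = η r² (r² - 2 cos r)`, the radial structure gives
`⟪∇G U, U⟫ = r φ'(r)` with `r = ‖U‖`, and then
`r φ'(r) - 3 φ(r) + 3 η r² = η r² ((r + sin r)² + (cos r + 1)² + 1) ≥ 0`. -/

open RealInnerProductSpace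

theorem fderiv_comp_norm_apply_self {E : Type*} [NormedAddCommGroup E] [NormedSpace ℝ E]
    (f : ℝ → ℝ) {f' : ℝ} {U : E} (hf : HasDerivAt f f' ‖U‖)
    (hU : DifferentiableAt ℝ (‖·‖) U) :
    fderiv ℝ (fun V => f ‖V‖) U U = ‖U‖ * f' := by
  rw [HasFDerivAt.fderiv (f := fun V => f ‖V‖) (hf.comp_hasFDerivAt U hU.hasFDerivAt)]
  simp only [smul_apply, hU.fderiv_norm_self, smul_eq_mul]
  ring

theorem inner_gradient_comp_norm_self {E : Type*} [NormedAddCommGroup E]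
    [InnerProductSpace ℝ E] [CompleteSpace E] (f : ℝ → ℝ) {f' : ℝ} (U : E)
    (hf : HasDerivAt f f' ‖U‖) :
    ⟪gradient (fun V => f ‖V‖) U, U⟫ = ‖U‖ * f' := by
  -- the norm is not differentiable at `0`, but there both sides vanish
  rcases eq_or_ne U 0 with rfl | hU
  · simp
  rw [gradient, InnerProductSpace.toDual_symm_apply]
  exact fderiv_comp_norm_apply_self f hf (differentiableAt_id.norm ℝ hU)

theorem hasDerivAt_mul_sq_mul_sq_sub_two_cos (η r : ℝ) :
    HasDerivAt (fun r => η * r ^ 2 * (r ^ 2 - 2 * Real.cos r))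
      (η * (4 * r ^ 3 - 4 * r * Real.cos r + 2 * r ^ 2 * Real.sin r)) r := by
  refine (((hasDerivAt_pow 2 r).const_mul η).fun_mul
    ((hasDerivAt_pow 2 r).fun_sub ((Real.hasDerivAt_cos r).const_mul 2))).congr_deriv ?_
  push_cast
  ring

theorem three_mul_sq_mul_sq_sub_two_cos_le {η : ℝ} (hη : 0 ≤ η) (r : ℝ) :
    3 * (η * r ^ 2 * (r ^ 2 - 2 * Real.cos r)) - 3 * η * r ^ 2 ≤
      r * (η * (4 * r ^ 3 - 4 * r * Real.cos r + 2 * r ^ 2 * Real.sin r)) := by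
  have hgap : r * (η * (4 * r ^ 3 - 4 * r * Real.cos r + 2 * r ^ 2 * Real.sin r)) -
      (3 * (η * r ^ 2 * (r ^ 2 - 2 * Real.cos r)) - 3 * η * r ^ 2) =
      η * r ^ 2 * ((r + Real.sin r) ^ 2 + (Real.cos r + 1) ^ 2 + 1) := by
    linear_combination (-η * r ^ 2) * Real.sin_sq_add_cos_sq r
  have : 0 ≤ η * r ^ 2 * ((r + Real.sin r) ^ 2 + (Real.cos r + 1) ^ 2 + 1) := by positivity
  linarith

theorem stmt_15_general (m : ℕ) (η : ℝ) (hη : 0 < η)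
    (G : EuclideanSpace ℝ (Fin m) → ℝ)
    (hGdef : ∀ U : EuclideanSpace ℝ (Fin m),
      G U = η * ‖U‖ ^ 2 * (‖U‖ ^ 2 - 2 * Real.cos ‖U‖)) :
    ∀ U : EuclideanSpace ℝ (Fin m),
      3 * G U - 3 * η * ‖U‖ ^ 2 ≤ ⟪gradient G U, U⟫ := by
  intro U
  have hG : G = fun V => (fun r => η * r ^ 2 * (r ^ 2 - 2 * Real.cos r)) ‖V‖ := funext hGdef
  rw [hG, inner_gradient_comp_norm_self _ U (hasDerivAt_mul_sq_mul_sq_sub_two_cos η ‖U‖)]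
  exact three_mul_sq_mul_sq_sub_two_cos_le hη.le ‖U‖

theorem stmt_15 (m : ℕ) (hm : 1 ≤ m) (η : ℝ) (hη : 0 < η)
    (G : EuclideanSpace ℝ (Fin m) → ℝ)
    (hGdef : ∀ U : EuclideanSpace ℝ (Fin m),
      G U = η * ‖U‖ ^ 2 * (‖U‖ ^ 2 - 2 * Real.cos ‖U‖)) :
    ∀ U : EuclideanSpace ℝ (Fin m),
      3 * G U - 3 * η * ‖U‖ ^ 2 ≤ ⟪gradient G U, U⟫ :=
  stmt_15_general m η hη G hGdef
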